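/- Let 𝔤₂₅ = 𝔥₃ × ℝ³ with single nonzero bracket [e₁,e₂] = e₃, ω = e¹∧e³ + e²∧e⁴ + e⁵∧e⁶, and J given by J(e₁)=e₂, J(e₂)=−e₁, J(e₃)=e₄, J(e₄)=−e₃, J(e₅)=e₆, J(e₆)=−e₅. Then (J,ω) is a pseudo-Kähler structure and the associated metric g = ω∘J is flat: the curvature tensor of its Levi-Civita connection vanishes identically. -/

import Mathlib

/-!
ω is a closed, nondegenerate, J-invariant 2-form and J is an integrable complex structure; all of
this is a direct computation on components. For flatness, the Koszul formula has the explicit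
solution ∇_{e₂} e₁ = -e₃, ∇_{e₂} e₂ = -e₄, all other ∇_{eᵢ} eⱼ = 0, and it is the only one since
g is nondegenerate. Both terms of the curvature then vanish: ∇ takes values in span(e₃, e₄),
which ∇ annihilates in its second slot, and [𝔤, 𝔤] = ℝe₃, which ∇ annihilates in its first slot.
-/

noncomputable section

/-- The underlying space ℝ⁶ of 𝔤₂₅ = 𝔥₃ × ℝ³. -/
abbrev V25 : Type := Fin 6 → ℝ

/-- Bracket of 𝔤₂₅: [e₁,e₂] = e₃. -/
def br25 (X Y : V25) : V25 :=
  ![0, 0, X 0 * Y 1 - X 1 * Y 0, 0, 0, 0]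

/-- ω = e¹∧e³ + e²∧e⁴ + e⁵∧e⁶. -/
def om25 (X Y : V25) : ℝ :=
  (X 0 * Y 2 - X 2 * Y 0) + (X 1 * Y 3 - X 3 * Y 1) + (X 4 * Y 5 - X 5 * Y 4)

/-- J(e₁)=e₂, J(e₂)=−e₁, J(e₃)=e₄, J(e₄)=−e₃, J(e₅)=e₆, J(e₆)=−e₅. -/
def J25 (X : V25) : V25 :=
  ![-X 1, X 0, -X 3, X 2, -X 5, X 4]

/-- Associated metric g(X,Y) = ω(X, JY). -/
def g25 (X Y : V25) : ℝ := om25 X (J25 Y)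

theorem om25_closed (X Y Z : V25) :
    om25 (br25 X Y) Z - om25 (br25 X Z) Y + om25 (br25 Y Z) X = 0 := by
  simp only [om25, br25, Matrix.cons_val, Matrix.cons_val_zero, Matrix.cons_val_one]
  ring

def omDual (X : V25) : V25 :=
  ![X 2, X 3, -X 0, -X 1, X 5, -X 4]

theorem om25_omDual (X : V25) : om25 X (omDual X) = -∑ i, X i ^ 2 := by
  simp only [om25, omDual, Fin.sum_univ_six, Matrix.cons_val, Matrix.cons_val_zero,
    Matrix.cons_val_one]
  ring

theorem om25_nondegenerate (X : V25) (h : ∀ Y, om25 X Y = 0) : X = 0 := by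
  have hsum : ∑ i, X i ^ 2 = 0 := by
    simpa [h (omDual X)] using om25_omDual X
  funext i
  exact pow_eq_zero_iff two_ne_zero |>.1 <|
    (Finset.sum_eq_zero_iff_of_nonneg fun j _ => sq_nonneg (X j)).1 hsum i (Finset.mem_univ i)

theorem J25_J25 (X : V25) : J25 (J25 X) = -X := by
  funext i
  fin_cases i <;> simp [J25]

theorem J25_nijenhuis (X Y : V25) :
    br25 (J25 X) (J25 Y) - br25 X Y - J25 (br25 (J25 X) Y) - J25 (br25 X (J25 Y)) = 0 := by
  funext i
  fin_cases i <;> simp [br25, J25]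
  ring

theorem om25_J25_J25 (X Y : V25) : om25 (J25 X) (J25 Y) = om25 X Y := by
  simp only [om25, J25, Matrix.cons_val, Matrix.cons_val_zero, Matrix.cons_val_one]
  ring

theorem g25_sub_left (X X' Y : V25) : g25 (X - X') Y = g25 X Y - g25 X' Y := by
  simp only [g25, om25, Pi.sub_apply]
  ring

theorem g25_nondegenerate (X : V25) (h : ∀ Y, g25 X Y = 0) : X = 0 :=
  om25_nondegenerate X fun Y => by
    simpa [g25, J25_J25] using h (J25 (J25 (J25 Y)))

def leviCivita25 (X Y : V25) : V25 :=
  ![0, 0, -(X 1 * Y 0), -(X 1 * Y 1), 0, 0]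

theorem leviCivita25_koszul (X Y Z : V25) :
    2 * g25 (leviCivita25 X Y) Z = g25 (br25 X Y) Z + g25 (br25 Z X) Y + g25 X (br25 Z Y) := by
  simp only [g25, om25, J25, br25, leviCivita25, Matrix.cons_val, Matrix.cons_val_zero,
    Matrix.cons_val_one]
  ring

theorem eq_leviCivita25_of_koszul (nabla : V25 → V25 → V25)
    (h : ∀ X Y Z : V25,
      2 * g25 (nabla X Y) Z = g25 (br25 X Y) Z + g25 (br25 Z X) Y + g25 X (br25 Z Y)) :
    nabla = leviCivita25 := by
  funext X Y
  refine sub_eq_zero.1 <| g25_nondegenerate _ fun Z => ?_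
  rw [g25_sub_left]
  linarith [h X Y Z, leviCivita25_koszul X Y Z]

theorem leviCivita25_leviCivita25 (X Y Z : V25) : leviCivita25 X (leviCivita25 Y Z) = 0 := by
  funext i
  fin_cases i <;> simp [leviCivita25]

theorem leviCivita25_br25_left (X Y Z : V25) : leviCivita25 (br25 X Y) Z = 0 := by
  funext i
  fin_cases i <;> simp [leviCivita25, br25]

theorem leviCivita25_curvature (X Y Z : V25) :
    leviCivita25 X (leviCivita25 Y Z) - leviCivita25 Y (leviCivita25 X Z)
      - leviCivita25 (br25 X Y) Z = 0 := by
  simp [leviCivita25_leviCivita25, leviCivita25_br25_left]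

/-- (J,ω) is a pseudo-Kähler structure on 𝔤₂₅ = 𝔥₃ × ℝ³ and the
associated metric g = ω∘J is flat: the curvature tensor vanishes identically. -/
theorem g25_pseudoKaehler_flat :
    (∀ X Y Z : V25,
      om25 (br25 X Y) Z - om25 (br25 X Z) Y + om25 (br25 Y Z) X = 0) ∧
    (∀ X : V25, (∀ Y : V25, om25 X Y = 0) → X = 0) ∧
    (∀ X : V25, J25 (J25 X) = -X) ∧
    (∀ X Y : V25,
      br25 (J25 X) (J25 Y) - br25 X Y
        - J25 (br25 (J25 X) Y) - J25 (br25 X (J25 Y)) = 0) ∧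
    (∀ X Y : V25, om25 (J25 X) (J25 Y) = om25 X Y) ∧
    (∀ (nabla : V25 → V25 → V25),
      (∀ X Y Z : V25,
        2 * g25 (nabla X Y) Z
          = g25 (br25 X Y) Z + g25 (br25 Z X) Y + g25 X (br25 Z Y)) →
      ∀ X Y Z : V25,
        nabla X (nabla Y Z) - nabla Y (nabla X Z) - nabla (br25 X Y) Z = 0) := by
  refine ⟨om25_closed, om25_nondegenerate, J25_J25, J25_nijenhuis, om25_J25_J25, ?_⟩
  intro nabla hKoszul
  rw [eq_leviCivita25_of_koszul nabla hKoszul]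
  exact leviCivita25_curvature

end
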